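/- arXiv:1008.5189 — 2 statements merged into one kernel-verified Lean document; each statement's English description precedes it below -/
import Mathlib

section
/- Every binary CSP (X, D, C) has a greatest maxRPC-consistent subdomain D*: D* is a maxRPC-consistent subdomain of D, and every maxRPC-consistent subdomain D' of D satisfies D'(x) ⊆ D*(x) for all variables x. (D* may assign empty domains; it equals the pointwise union of all maxRPC-consistent subdomains of D.) -/
/-- A binary CSP over variables `V` and values `A`: `cns i j` says there is a
constraint between variables `i` and `j` (symmetric, irreflexive), and
`allowed i a j b` says the pair of values `(a, b)` is allowed by that
constraint (symmetric). -/
structure BinaryCSP (V : Type*) (A : Type*) where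
  cns : V → V → Prop
  cns_symm : ∀ i j, cns i j → cns j i
  cns_irrefl : ∀ i, ¬ cns i i
  allowed : V → A → V → A → Prop
  allowed_symm : ∀ i a j b, allowed i a j b → allowed j b i a

namespace BinaryCSP

variable {V A : Type*}

/-- Two values are compatible iff there is no constraint between the two
variables or the pair is allowed by the constraint. -/
def compatible (P : BinaryCSP V A) (i : V) (a : A) (j : V) (b : A) : Prop :=
  P.cns i j → P.allowed i a j b

/-- A subdomain assigns to each variable a subset of its domain. -/
def Subdomain (D' D : V → Set A) : Prop := ∀ x, D' x ⊆ D x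

/-- The pair `(a, b)` (for variables `i`, `j`) is path consistent w.r.t. `D`:
every third variable `k` contains a PC-witness, i.e. a value compatible with
both `a` and `b`. -/
def IsPC (P : BinaryCSP V A) (D : V → Set A) (i : V) (a : A) (j : V) (b : A) : Prop :=
  ∀ k, k ≠ i → k ≠ j → ∃ c ∈ D k, P.compatible i a k c ∧ P.compatible j b k c

/-- `b` (a value of variable `j`) is an AC-support of `a` (a value of `i`). -/
def IsACSupport (P : BinaryCSP V A) (i : V) (a : A) (j : V) (b : A) : Prop :=
  P.cns i j ∧ P.compatible i a j b

/-- `b` is a PC-support of `a` w.r.t. `D`: an AC-support such that `(a, b)` is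
path consistent w.r.t. `D`. -/
def IsPCSupport (P : BinaryCSP V A) (D : V → Set A) (i : V) (a : A) (j : V) (b : A) : Prop :=
  P.IsACSupport i a j b ∧ P.IsPC D i a j b

/-- The value `a ∈ D i` is maxRPC w.r.t. `D`: for every constraint `c_ij` it
has a PC-support in `D j` w.r.t. `D`. -/
def MaxRPCVal (P : BinaryCSP V A) (D : V → Set A) (i : V) (a : A) : Prop :=
  ∀ j, P.cns i j → ∃ b ∈ D j, P.IsPCSupport D i a j b

/-- A domain `D` is maxRPC-consistent iff every value of every variable is
maxRPC w.r.t. `D`. -/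
def MaxRPCDom (P : BinaryCSP V A) (D : V → Set A) : Prop :=
  ∀ i, ∀ a, a ∈ D i → P.MaxRPCVal D i a

/-- A domain `D` is arc-consistent iff every value of every variable has, for
every constraint, an AC-support in the other variable's domain. -/
def ACDom (P : BinaryCSP V A) (D : V → Set A) : Prop :=
  ∀ i, ∀ a, a ∈ D i → ∀ j, P.cns i j → ∃ b ∈ D j, P.IsACSupport i a j b

/-- `Dstar` is the greatest maxRPC-consistent subdomain of `D`. -/
def GreatestMaxRPCSub (P : BinaryCSP V A) (D Dstar : V → Set A) : Prop :=
  Subdomain Dstar D ∧ P.MaxRPCDom Dstar ∧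
    ∀ D', Subdomain D' D → P.MaxRPCDom D' → ∀ x, D' x ⊆ Dstar x

/-- `Dstar` is the greatest arc-consistent subdomain of `D`. -/
def GreatestACSub (P : BinaryCSP V A) (D Dstar : V → Set A) : Prop :=
  Subdomain Dstar D ∧ P.ACDom Dstar ∧
    ∀ D', Subdomain D' D → P.ACDom D' → ∀ x, D' x ⊆ Dstar x

end BinaryCSP

open BinaryCSP

/-- Every binary CSP has a greatest maxRPC-consistent subdomain,
namely the pointwise union of all maxRPC-consistent subdomains. -/
theorem exists_greatest_maxRPC_subdomain {V A : Type*} [Finite V]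
    (P : BinaryCSP V A) (D : V → Set A)
    (hDfin : ∀ x, (D x).Finite) :
    ∃ Dstar : V → Set A,
      P.GreatestMaxRPCSub D Dstar ∧
      Dstar = fun x => {a | ∃ D', Subdomain D' D ∧ P.MaxRPCDom D' ∧ a ∈ D' x} := by
  refine ⟨fun x => {a | ∃ D', Subdomain D' D ∧ P.MaxRPCDom D' ∧ a ∈ D' x}, ⟨?_, ?_, ?_⟩, rfl⟩
  · rintro x a ⟨D', hsub, _, ha⟩
    exact hsub x ha
  · rintro i a ⟨D', hsub, hmax, ha⟩ j hij
    obtain ⟨b, hb, ⟨hac, hpc⟩⟩ := hmax i a ha j hij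
    refine ⟨b, ⟨D', hsub, hmax, hb⟩, hac, fun k hki hkj => ?_⟩
    obtain ⟨c, hc, hcomp⟩ := hpc k hki hkj
    exact ⟨c, ⟨D', hsub, hmax, hc⟩, hcomp⟩
  · intro D' hsub hmax x a ha
    exact ⟨D', hsub, hmax, ha⟩
end

section
/- Let (X, D, C) be a binary CSP and suppose a value a_i ∈ D(x_i) is not maxRPC with respect to D (soundness of value deletion). Then a_i ∉ D'(x_i) for every maxRPC-consistent subdomain D' of D; consequently, the greatest maxRPC-consistent subdomain of D coincides with the greatest maxRPC-consistent subdomain of the domain obtained from D by removing a_i from D(x_i). -/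
open BinaryCSP

/-- Soundness of value deletion: if `a_i ∈ D(x_i)` is not maxRPC
w.r.t. `D`, then `a_i` belongs to no maxRPC-consistent subdomain of `D`, and
the greatest maxRPC-consistent subdomain of `D` coincides with the greatest
maxRPC-consistent subdomain of `D` with `a_i` removed from `D(x_i)`. -/
theorem maxRPC_deletion_sound {V A : Type*} [Finite V] [DecidableEq V]
    (P : BinaryCSP V A) (D : V → Set A)
    (hDfin : ∀ x, (D x).Finite)
    (xi : V) (ai : A) (hai : ai ∈ D xi)
    (hnot : ¬ P.MaxRPCVal D xi ai) :
    (∀ D', Subdomain D' D → P.MaxRPCDom D' → ai ∉ D' xi) ∧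
    (∀ D1 D2 : V → Set A,
      P.GreatestMaxRPCSub D D1 →
      P.GreatestMaxRPCSub (fun y => if y = xi then D y \ {ai} else D y) D2 →
      D1 = D2) := by
  constructor
  · intro D' hsub hrpc hmem
    apply hnot
    intro j hj
    obtain ⟨b, hb, ⟨hac, hpc⟩⟩ := hrpc xi ai hmem j hj
    refine ⟨b, hsub j hb, hac, ?_⟩
    intro k hki hkj
    obtain ⟨c, hc, h1, h2⟩ := hpc k hki hkj
    exact ⟨c, hsub k hc, h1, h2⟩
  · intro D1 D2 h1 h2
    obtain ⟨h1sub, h1rpc, h1max⟩ := h1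
    obtain ⟨h2sub, h2rpc, h2max⟩ := h2
    have hnotin : ∀ D', Subdomain D' D → P.MaxRPCDom D' → ai ∉ D' xi := by
      intro D' hsub hrpc hmem
      apply hnot
      intro j hj
      obtain ⟨b, hb, ⟨hac, hpc⟩⟩ := hrpc xi ai hmem j hj
      refine ⟨b, hsub j hb, hac, ?_⟩
      intro k hki hkj
      obtain ⟨c, hc, h1, h2⟩ := hpc k hki hkj
      exact ⟨c, hsub k hc, h1, h2⟩
    funext x
    apply Set.Subset.antisymm
    · apply h2max D1 _ h1rpc
      intro y b hb
      by_cases hy : y = xi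
      · subst hy
        simp only [if_pos rfl]
        refine ⟨h1sub y hb, ?_⟩
        simp only [Set.mem_singleton_iff]
        intro hba
        exact hnotin D1 h1sub h1rpc (hba ▸ hb)
      · simpa [hy] using h1sub y hb
    · apply h1max D2 _ h2rpc
      intro y b hb
      have := h2sub y hb
      by_cases hy : y = xi
      · subst hy; simp only [if_pos rfl] at this; exact this.1
      · simpa [hy] using this
end
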